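/- arXiv:2005.11578 — 3 statements merged into one kernel-verified Lean document; each statement's English description precedes it below -/
import Mathlib

section
/- Let (X,d) be a compact metric space and f : X → X a continuous positively expansive map with expansivity constant ε > 0. Then for every t ∈ (0, ε), every r ∈ (0, t), and every x ∈ X, there exists n₀ ∈ ℕ such that for all n ≥ n₀, the closed Bowen ball {y : d(f^i x, f^i y) ≤ t for all 0 ≤ i < n} is contained in the open ball B(x, r). -/
/-- For a continuous positively expansive map on a compact metric space, closed Bowen balls
of radius `t < ε` eventually lie inside any given metric ball `B(x, r)` with `0 < r < t`. -/
theorem stmt3 {X : Type*} [MetricSpace X] [CompactSpace X] (f : X → X) (hf : Continuous f)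
    (ε : ℝ) (hε : 0 < ε)
    (hexp : ∀ x : X, (⋂ i : ℕ, f^[i] ⁻¹' Metric.closedBall (f^[i] x) ε) = {x})
    (t r : ℝ) (ht : t ∈ Set.Ioo 0 ε) (hr : r ∈ Set.Ioo 0 t) (x : X) :
    ∃ n₀ : ℕ, ∀ n ≥ n₀,
      {y : X | ∀ i < n, dist (f^[i] x) (f^[i] y) ≤ t} ⊆ Metric.ball x r := by
  by_contra h
  push_neg at h
  simp only [Set.not_subset] at h
  choose n hn y hy hy' using h
  obtain ⟨z, -, φ, hφ, hlim⟩ := isCompact_univ.tendsto_subseq (fun m => Set.mem_univ (y m))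
  have hz : z = x := by
    have hmem : z ∈ (⋂ i : ℕ, f^[i] ⁻¹' Metric.closedBall (f^[i] x) ε) := by
      refine Set.mem_iInter.2 fun i => ?_
      simp only [Set.mem_preimage, Metric.mem_closedBall]
      have hc : Filter.Tendsto (fun k => dist (f^[i] (y (φ k))) (f^[i] x)) Filter.atTop
          (nhds (dist (f^[i] z) (f^[i] x))) :=
        (((hf.iterate i).tendsto z).comp hlim).dist tendsto_const_nhds
      refine le_of_tendsto hc ?_
      filter_upwards [Filter.eventually_ge_atTop (i + 1)] with k hk
      have hik : i < n (φ k) :=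
        lt_of_lt_of_le (Nat.lt_of_succ_le hk) ((hφ.id_le k).trans (hn (φ k)))
      exact le_trans (dist_comm (f^[i] x) (f^[i] (y (φ k))) ▸ hy (φ k) i hik) ht.2.le
    rwa [hexp x, Set.mem_singleton_iff] at hmem
  have hrle : r ≤ dist z x := by
    have hc : Filter.Tendsto (fun k => dist (y (φ k)) x) Filter.atTop (nhds (dist z x)) :=
      hlim.dist tendsto_const_nhds
    refine ge_of_tendsto hc (Filter.Eventually.of_forall fun k => ?_)
    have := hy' (φ k)
    rw [Metric.mem_ball, not_lt] at this
    exact this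
  rw [hz, dist_self] at hrle
  exact absurd hrle (not_le.2 hr.1)
end

section
/- Let X be a compact metric space, f : X → X continuous, μ a Borel probability measure on X, s ∈ (0,1), r > 0, n ∈ ℕ. Let E be a finite (n,r)-generating set, i.e. X = ⋃_{x∈E} B_n(x,r). Then ∫_{supp μ} μ(B_n(x,2r))^{s-1} dμ(x) ≤ Σ_{x∈E} μ(B_n(x,r))^s. -/
open Metric

/-- The Bowen metric of order `n`: `d_n(x,y) = max{d(f^i x, f^i y) : 0 ≤ i < n}`. -/
noncomputable def bowenDist {X : Type*} [PseudoMetricSpace X] (f : X → X) (n : ℕ) (x y : X) : ℝ :=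
  (((Finset.range n).sup fun i => nndist (f^[i] x) (f^[i] y) : NNReal) : ℝ)

/-- The open Bowen ball of size `n` and radius `ε` centered at `x`. -/
def bowenBall {X : Type*} [PseudoMetricSpace X] (f : X → X) (n : ℕ) (x : X) (ε : ℝ) : Set X :=
  {y | bowenDist f n x y < ε}

/-- The piecewise-linear bump function of `d_n(x,·)` at levels `ε, 2ε`: equal to `1` when
`d_n(x,y) ≤ ε`, to `2 − d_n(x,y)/ε` when `ε ≤ d_n(x,y) ≤ 2ε`, and to `0` when
`d_n(x,y) ≥ 2ε`. -/
noncomputable def bowenBump {X : Type*} [PseudoMetricSpace X] (f : X → X) (n : ℕ) (ε : ℝ)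
    (x y : X) : ℝ :=
  max 0 (min 1 (2 - bowenDist f n x y / ε))

open MeasureTheory
open scoped ENNReal

/-- The topological support of a measure on a metric space: points all of whose
metric neighborhoods have positive measure. -/
def measSupport {X : Type*} [MetricSpace X] [MeasurableSpace X] (μ : Measure X) : Set X :=
  {x | ∀ ε > (0 : ℝ), 0 < μ (Metric.ball x ε)}


/-! Cover `X` by the Bowen balls `B_n(z, r)`, `z ∈ E`. If `x ∈ B_n(z, r)` then
`B_n(z, r) ⊆ B_n(x, 2r)`, and since `s - 1 ≤ 0` the integrand is at most `μ(B_n(z, r))^(s-1)` on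
`B_n(z, r)`; integrating it over that ball gives at most `μ(B_n(z, r))^s`. -/

section Bowen

variable {X : Type*} [PseudoMetricSpace X] (f : X → X) (n : ℕ)

lemma bowenDist_comm (x y : X) : bowenDist f n x y = bowenDist f n y x := by
  simp only [bowenDist, nndist_comm]

lemma bowenDist_triangle (x y z : X) :
    bowenDist f n x z ≤ bowenDist f n x y + bowenDist f n y z := by
  unfold bowenDist
  rw [← NNReal.coe_add, NNReal.coe_le_coe]
  exact Finset.sup_le fun i hi => (nndist_triangle _ (f^[i] y) _).trans
    (add_le_add (Finset.le_sup (f := fun i => nndist (f^[i] x) (f^[i] y)) hi)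
      (Finset.le_sup (f := fun i => nndist (f^[i] y) (f^[i] z)) hi))

lemma bowenBall_subset_of_mem {x z : X} {r : ℝ} (hx : x ∈ bowenBall f n z r) :
    bowenBall f n z r ⊆ bowenBall f n x (2 * r) := fun y hy =>
  calc bowenDist f n x y ≤ bowenDist f n z x + bowenDist f n z y := by
        rw [bowenDist_comm f n z x]; exact bowenDist_triangle f n x z y
    _ < 2 * r := by rw [two_mul]; exact add_lt_add hx hy

variable {f}

lemma continuous_bowenDist (hf : Continuous f) (x : X) : Continuous (bowenDist f n x) :=
  NNReal.continuous_coe.comp <| Continuous.finset_sup_apply fun i _ =>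
    continuous_const.nndist (hf.iterate i)

lemma isOpen_bowenBall (hf : Continuous f) (x : X) (r : ℝ) : IsOpen (bowenBall f n x r) :=
  isOpen_lt (continuous_bowenDist n hf x) continuous_const

end Bowen

section Measure

variable {α : Type*} [MeasurableSpace α] (μ : Measure α)

lemma lintegral_biUnion_finset_le {ι : Type*} (E : Finset ι) (B : ι → Set α) (g : α → ℝ≥0∞) :
    ∫⁻ x in ⋃ i ∈ E, B i, g x ∂μ ≤ ∑ i ∈ E, ∫⁻ x in B i, g x ∂μ := by
  have := lintegral_iUnion_le (μ := μ) (fun i : E => B i) g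
  rwa [tsum_fintype, Finset.sum_coe_sort E (fun i => ∫⁻ x in B i, g x ∂μ),
    Set.iUnion_subtype] at this

lemma integral_le_of_lintegral_ofReal_le {g : α → ℝ} (hg : 0 ≤ᵐ[μ] g) {c : ℝ} (hc : 0 ≤ c)
    (h : ∫⁻ x, ENNReal.ofReal (g x) ∂μ ≤ ENNReal.ofReal c) : ∫ x, g x ∂μ ≤ c := by
  -- no measurability is needed: the Bochner integral of a non-measurable function is `0`
  by_cases hm : AEStronglyMeasurable g μ
  · rw [integral_eq_lintegral_of_nonneg_ae hg hm]
    exact ENNReal.toReal_le_of_le_ofReal hc h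
  · rw [integral_non_aestronglyMeasurable hm]
    exact hc

lemma setLIntegral_rpow_measure_le [IsFiniteMeasure μ] {B : Set α} (hB : MeasurableSet B)
    {A : α → Set α} (hA : ∀ x ∈ B, B ⊆ A x) {s : ℝ} (hs : s ≤ 1) :
    ∫⁻ x in B, ENNReal.ofReal ((μ (A x)).toReal ^ (s - 1)) ∂μ ≤
      ENNReal.ofReal ((μ B).toReal ^ s) := by
  by_cases hB0 : μ B = 0
  · rw [setLIntegral_measure_zero _ _ hB0]
    exact zero_le
  set t := (μ B).toReal with ht
  have htpos : 0 < t := ENNReal.toReal_pos hB0 (measure_ne_top μ B)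
  have hbound : ∀ x ∈ B, ENNReal.ofReal ((μ (A x)).toReal ^ (s - 1)) ≤
      ENNReal.ofReal (t ^ (s - 1)) := fun x hx =>
    ENNReal.ofReal_le_ofReal <| Real.rpow_le_rpow_of_nonpos htpos
      (ENNReal.toReal_mono (measure_ne_top μ _) (measure_mono (hA x hx))) (by linarith)
  calc ∫⁻ x in B, ENNReal.ofReal ((μ (A x)).toReal ^ (s - 1)) ∂μ
      ≤ ∫⁻ _ in B, ENNReal.ofReal (t ^ (s - 1)) ∂μ := setLIntegral_mono' hB hbound
    _ = ENNReal.ofReal (t ^ (s - 1)) * ENNReal.ofReal t := by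
        rw [setLIntegral_const, ht, ENNReal.ofReal_toReal (measure_ne_top μ B)]
    _ = ENNReal.ofReal (t ^ s) := by
        rw [← ENNReal.ofReal_mul (by positivity), ← Real.rpow_add_one htpos.ne', sub_add_cancel]

end Measure

theorem stmt14_general {X : Type*} [MetricSpace X] [MeasurableSpace X] [BorelSpace X]
    (f : X → X) (hf : Continuous f) (μ : Measure X) [IsProbabilityMeasure μ]
    (s : ℝ) (hs : s ∈ Set.Ioo (0 : ℝ) 1) (r : ℝ) (n : ℕ)
    (E : Finset X) (hE : ∀ y : X, ∃ x ∈ E, y ∈ bowenBall f n x r) :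
    ∫ x in measSupport μ, ((μ (bowenBall f n x (2 * r))).toReal) ^ (s - 1) ∂μ ≤
      ∑ x ∈ E, ((μ (bowenBall f n x r)).toReal) ^ s := by
  have hcover : measSupport μ ⊆ ⋃ z ∈ E, bowenBall f n z r := fun y _ =>
    let ⟨z, hz, hyz⟩ := hE y
    Set.mem_biUnion hz hyz
  refine integral_le_of_lintegral_ofReal_le _ (.of_forall fun x => by positivity)
    (Finset.sum_nonneg fun z _ => by positivity) ?_
  calc ∫⁻ x in measSupport μ, ENNReal.ofReal ((μ (bowenBall f n x (2 * r))).toReal ^ (s - 1)) ∂μ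
      ≤ ∑ z ∈ E, ∫⁻ x in bowenBall f n z r,
          ENNReal.ofReal ((μ (bowenBall f n x (2 * r))).toReal ^ (s - 1)) ∂μ :=
        (lintegral_mono_set hcover).trans (lintegral_biUnion_finset_le μ E _ _)
    _ ≤ ∑ z ∈ E, ENNReal.ofReal ((μ (bowenBall f n z r)).toReal ^ s) :=
        Finset.sum_le_sum fun z _ => setLIntegral_rpow_measure_le μ
          (isOpen_bowenBall n hf z r).measurableSet
          (fun _ hx => bowenBall_subset_of_mem f n hx) hs.2.le
    _ = ENNReal.ofReal (∑ z ∈ E, (μ (bowenBall f n z r)).toReal ^ s) :=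
        (ENNReal.ofReal_sum_of_nonneg fun z _ => by positivity).symm

theorem stmt14 {X : Type*} [MetricSpace X] [CompactSpace X] [MeasurableSpace X] [BorelSpace X]
    (f : X → X) (hf : Continuous f) (μ : Measure X) [IsProbabilityMeasure μ]
    (s : ℝ) (hs : s ∈ Set.Ioo (0 : ℝ) 1) (r : ℝ) (hr : 0 < r) (n : ℕ)
    (E : Finset X) (hE : ∀ y : X, ∃ x ∈ E, y ∈ bowenBall f n x r) :
    ∫ x in measSupport μ, ((μ (bowenBall f n x (2 * r))).toReal) ^ (s - 1) ∂μ ≤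
      ∑ x ∈ E, ((μ (bowenBall f n x r)).toReal) ^ s :=
  stmt14_general f hf μ s hs r n E hE
end

section
/- Let X be a Polish metric space and f : X → X a uniform homeomorphism. Then the set M_exp of expansive measures of f (Borel probability measures μ for which there exists δ > 0 with μ(Γ_δ(x)) = 0 for every x ∈ X, where Γ_δ(x) = {y : d(f^i x, f^i y) ≤ δ for all i ∈ ℤ}) is a G_{δσ} subset of P(X) with the weak topology, i.e. a countable union of G_δ sets. -/
/-!
Let `W(a, ε)` be the set of probability measures giving mass at least `ε` to some `Γ_a(x)`, so that
the expansive measures are `⋃ₖ ⋂ₘ W(1/k, 1/m)ᶜ`. The key point is `closure W(a, ε) ⊆ W(3a, ε)`,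
which makes this set equal to `⋃ₖ ⋂ₘ (closure W(1/k, 1/m))ᶜ`, a `G_δσ`. If `μⱼ → ν` with
`μⱼ(Γ_a(xⱼ)) ≥ ε`, the convergent sequence `μⱼ` is tight, so some `yⱼ ∈ Γ_a(xⱼ)` lie in a fixed
compact set and, along a subsequence, `yⱼ → y`. Since `Γ_a(xⱼ) ⊆ Γ_{2a}(yⱼ)`, for each `n` these
sets eventually lie in the closed finite-time ball `V[y, n, 3a]`; the portmanteau theorem gives
`ν(V[y, n, 3a]) ≥ ε`, and letting `n → ∞`, `ν(Γ_{3a}(y)) ≥ ε`.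
-/

open MeasureTheory
open scoped ENNReal

/-- `Γ_δ(x) = {y : d(f^i x, f^i y) ≤ δ for all i ∈ ℤ}`. -/
def expansiveGamma {X : Type*} [MetricSpace X] (f : Equiv.Perm X) (δ : ℝ) (x : X) : Set X :=
  {y | ∀ i : ℤ, dist ((f ^ i) x) ((f ^ i) y) ≤ δ}

open Filter Topology Set

lemma isTightMeasureSet_range_of_tendsto {Y : Type*} [TopologicalSpace Y] [PolishSpace Y]
    [MeasurableSpace Y] [BorelSpace Y] {μs : ℕ → ProbabilityMeasure Y} {ν : ProbabilityMeasure Y}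
    (h : Tendsto μs atTop (𝓝 ν)) : IsTightMeasureSet (range fun n ↦ (μs n : Measure Y)) := by
  let _ := TopologicalSpace.upgradeIsCompletelyMetrizable Y
  have hK : IsCompact (closure (range μs)) :=
    h.isCompact_insert_range.closure_of_subset (subset_insert _ _)
  refine (isTightMeasureSet_of_isCompact_closure hK).subset ?_
  rintro _ ⟨n, rfl⟩
  exact ⟨μs n, mem_range_self n, rfl⟩

lemma inter_nonempty_of_measure_compl_lt {α : Type*} [MeasurableSpace α] {μ : Measure α}
    {s K : Set α} {ε : ℝ≥0∞} (hs : ε ≤ μ s) (hK : μ Kᶜ < ε) : (s ∩ K).Nonempty := by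
  by_contra h
  rw [not_nonempty_iff_eq_empty, ← disjoint_iff_inter_eq_empty] at h
  exact (hs.trans (measure_mono h.subset_compl_right)).not_gt hK

lemma Equiv.Perm.continuous_zpow {X : Type*} [TopologicalSpace X] {f : Equiv.Perm X}
    (hf : Continuous f) (hf' : Continuous f.symm) (i : ℤ) : Continuous ⇑(f ^ i) := by
  induction i using Int.induction_on with
  | zero => exact continuous_id
  | succ i ih => rw [zpow_add_one, coe_mul]; exact ih.comp hf
  | pred i ih => rw [zpow_sub_one, coe_mul]; exact ih.comp hf'

section Dynamics

variable {X : Type*} [MetricSpace X] (f : Equiv.Perm X)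

/-- The two-sided closed Bowen ball, `V[x,n,δ]` in Lee–Morales–Shin. -/
def bowenClosedBall (δ : ℝ) (x : X) (n : ℕ) : Set X :=
  ⋂ i ∈ Finset.Icc (-n : ℤ) n, (f ^ i) ⁻¹' Metric.closedBall ((f ^ i) x) δ

lemma mem_bowenClosedBall {δ : ℝ} {x y : X} {n : ℕ} :
    y ∈ bowenClosedBall f δ x n ↔ ∀ i : ℤ, |i| ≤ n → dist ((f ^ i) x) ((f ^ i) y) ≤ δ := by
  simp [bowenClosedBall, abs_le, dist_comm]

lemma antitone_bowenClosedBall (δ : ℝ) (x : X) : Antitone (bowenClosedBall f δ x) :=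
  fun _ _ hmn _ hy ↦ (mem_bowenClosedBall f).2 fun i hi ↦
    (mem_bowenClosedBall f).1 hy i (hi.trans (by exact_mod_cast hmn))

lemma iInter_bowenClosedBall (δ : ℝ) (x : X) :
    ⋂ n, bowenClosedBall f δ x n = expansiveGamma f δ x := by
  ext y
  simp only [mem_iInter, mem_bowenClosedBall, expansiveGamma, mem_ofPred_eq]
  exact ⟨fun h i ↦ h i.natAbs i (Int.abs_eq_natAbs i).le, fun h _ i _ ↦ h i⟩

variable {f}

lemma isClosed_bowenClosedBall (hf : Continuous f) (hf' : Continuous f.symm) (δ : ℝ) (x : X)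
    (n : ℕ) : IsClosed (bowenClosedBall f δ x n) :=
  isClosed_biInter fun i _ ↦ Metric.isClosed_closedBall.preimage (f.continuous_zpow hf hf' i)

lemma bowenClosedBall_mem_nhds (hf : Continuous f) (hf' : Continuous f.symm) {δ : ℝ}
    (hδ : 0 < δ) (x : X) (n : ℕ) : bowenClosedBall f δ x n ∈ 𝓝 x :=
  (Finset.iInter_mem_sets _).2 fun i _ ↦
    (f.continuous_zpow hf hf' i).continuousAt.preimage_mem_nhds (Metric.closedBall_mem_nhds _ hδ)

lemma expansiveGamma_mono (x : X) : Monotone fun δ ↦ expansiveGamma f δ x :=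
  fun _ _ hab _ hy i ↦ (hy i).trans hab

lemma expansiveGamma_subset_of_mem {a b : ℝ} {x y : X} (hy : y ∈ expansiveGamma f a x) :
    expansiveGamma f b x ⊆ expansiveGamma f (a + b) y := fun _ hz i ↦
  (dist_triangle _ ((f ^ i) x) _).trans (add_le_add ((dist_comm _ _).trans_le (hy i)) (hz i))

lemma expansiveGamma_subset_bowenClosedBall {a b : ℝ} {x y : X} {n : ℕ}
    (hy : y ∈ bowenClosedBall f a x n) :
    expansiveGamma f b y ⊆ bowenClosedBall f (a + b) x n := fun _ hz ↦
  (mem_bowenClosedBall f).2 fun i hi ↦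
    (dist_triangle _ ((f ^ i) y) _).trans (add_le_add ((mem_bowenClosedBall f).1 hy i hi) (hz i))

variable [MeasurableSpace X] [OpensMeasurableSpace X]

lemma tendsto_measure_bowenClosedBall (hf : Continuous f) (hf' : Continuous f.symm)
    (μ : Measure X) [IsFiniteMeasure μ] (δ : ℝ) (x : X) :
    Tendsto (fun n ↦ μ (bowenClosedBall f δ x n)) atTop (𝓝 (μ (expansiveGamma f δ x))) := by
  rw [← iInter_bowenClosedBall]
  exact tendsto_measure_iInter_atTop
    (fun n ↦ (isClosed_bowenClosedBall hf hf' δ x n).measurableSet.nullMeasurableSet)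
    (antitone_bowenClosedBall f δ x) ⟨0, measure_ne_top _ _⟩

lemma le_measure_expansiveGamma_of_tendsto (hf : Continuous f) (hf' : Continuous f.symm)
    {ι : Type*} {L : Filter ι} [L.NeBot] {μs : ι → ProbabilityMeasure X} {ν : ProbabilityMeasure X}
    {ys : ι → X} {y : X} {a b : ℝ} {ε : ℝ≥0∞} (ha : 0 < a)
    (hμ : Tendsto μs L (𝓝 ν)) (hy : Tendsto ys L (𝓝 y))
    (hle : ∀ j, ε ≤ (μs j : Measure X) (expansiveGamma f b (ys j))) :
    ε ≤ (ν : Measure X) (expansiveGamma f (a + b) y) := by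
  refine ge_of_tendsto' (tendsto_measure_bowenClosedBall hf hf' _ _ y) fun n ↦ ?_
  have hev : ∀ᶠ j in L, ε ≤ (μs j : Measure X) (bowenClosedBall f (a + b) y n) :=
    (hy.eventually (bowenClosedBall_mem_nhds hf hf' ha y n)).mono fun j hj ↦
      (hle j).trans (measure_mono (expansiveGamma_subset_bowenClosedBall hj))
  exact (le_limsup_of_frequently_le hev.frequently).trans
    (ProbabilityMeasure.limsup_measure_closed_le_of_tendsto hμ
      (isClosed_bowenClosedBall hf hf' _ y n))

variable (f) in
def heavyGammaMeasures (δ : ℝ) (ε : ℝ≥0∞) : Set (ProbabilityMeasure X) :=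
  {μ | ∃ x, ε ≤ (μ : Measure X) (expansiveGamma f δ x)}

lemma closure_heavyGammaMeasures_subset [PolishSpace X] [BorelSpace X] (hf : Continuous f)
    (hf' : Continuous f.symm) {a : ℝ} (ha : 0 < a) {ε : ℝ≥0∞} (hε₀ : ε ≠ 0) (hε : ε ≠ ∞) :
    closure (heavyGammaMeasures f a ε) ⊆ heavyGammaMeasures f (3 * a) ε := by
  intro ν hν
  obtain ⟨μs, hμs, hlim⟩ := mem_closure_iff_seq_limit.1 hν
  choose xs hxs using hμs
  obtain ⟨K, hK, hKc⟩ := isTightMeasureSet_iff_exists_isCompact_measure_compl_le.1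
    (isTightMeasureSet_range_of_tendsto hlim) (ε / 2) (ENNReal.half_pos hε₀)
  have hmeet (j : ℕ) : (expansiveGamma f a (xs j) ∩ K).Nonempty :=
    inter_nonempty_of_measure_compl_lt (hxs j)
      ((hKc _ ⟨j, rfl⟩).trans_lt (ENNReal.half_lt_self hε₀ hε))
  choose ys hys using hmeet
  obtain ⟨y, -, φ, hφ, hyφ⟩ := hK.tendsto_subseq fun j ↦ (hys j).2
  refine ⟨y, (show a + (a + a) = 3 * a by ring) ▸ le_measure_expansiveGamma_of_tendsto hf hf' ha
    (hlim.comp hφ.tendsto_atTop) hyφ fun j ↦ ?_⟩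
  exact (hxs (φ j)).trans (measure_mono (expansiveGamma_subset_of_mem (hys (φ j)).1))

end Dynamics

/-- The set of expansive measures of `f` is a `G_δσ` subset (a countable union of `G_δ`
sets) of the space of Borel probability measures with the weak topology. -/
theorem stmt19 {X : Type*} [MetricSpace X] [PolishSpace X] [MeasurableSpace X] [BorelSpace X]
    (f : Equiv.Perm X) (hf : UniformContinuous f) (hf' : UniformContinuous f.symm) :
    ∃ S : ℕ → Set (ProbabilityMeasure X), (∀ k, IsGδ (S k)) ∧
      {μ : ProbabilityMeasure X |
        ∃ δ > (0 : ℝ), ∀ x : X, (μ : Measure X) (expansiveGamma f δ x) = 0} = ⋃ k, S k := by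
  refine ⟨fun k ↦ ⋂ m : ℕ, (closure (heavyGammaMeasures f (1 / (k + 1)) (m + 1)⁻¹))ᶜ,
    fun k ↦ .iInter fun m ↦ isClosed_closure.isOpen_compl.isGδ, ?_⟩
  ext μ
  simp only [mem_ofPred_eq, mem_iUnion, mem_iInter, mem_compl_iff]
  constructor
  · rintro ⟨δ, hδ, hμ⟩
    obtain ⟨k, hk⟩ := exists_nat_one_div_lt (div_pos hδ three_pos)
    refine ⟨k, fun m hm ↦ ?_⟩
    obtain ⟨x, hx⟩ := closure_heavyGammaMeasures_subset hf.continuous hf'.continuous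
      Nat.one_div_pos_of_nat (by simp) (by simp) hm
    have hδk : 3 * (1 / (k + 1 : ℝ)) ≤ δ := by linarith
    rw [measure_mono_null (expansiveGamma_mono x hδk) (hμ x)] at hx
    simp at hx
  · rintro ⟨k, hk⟩
    refine ⟨1 / (k + 1), Nat.one_div_pos_of_nat, fun x ↦ ?_⟩
    by_contra h₀
    obtain ⟨m, hm⟩ := ENNReal.exists_inv_nat_lt h₀
    refine hk m (subset_closure ⟨x, ?_⟩)
    exact (ENNReal.inv_le_inv.2 le_self_add).trans hm.le
end
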